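/- arXiv:2512.06253 — 5 statements merged into one kernel-verified Lean document; each statement's English description precedes it below -/
import Mathlib

section
/- For all real n > 0, the ratio of Gamma functions satisfies √(n + 1/4) < Γ(n+1)/Γ(n+1/2) < √(n + 1/2). -/
open Real

/-- Log-convexity of `Γ` at the midpoint of `x` and `x+1`. -/
lemma lemA {x : ℝ} (hx : 0 < x) :
    Gamma (x + 1/2) ^ 2 ≤ Gamma x * Gamma (x + 1) := by
  have h1 : (0:ℝ) < x + 1 := by linarith
  have h := Real.convexOn_log_Gamma.2 (Set.mem_Ioi.2 hx) (Set.mem_Ioi.2 h1)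
    (by norm_num : (0:ℝ) ≤ 1/2) (by norm_num : (0:ℝ) ≤ 1/2) (by norm_num)
  have hmid : (1/2 : ℝ) • x + (1/2 : ℝ) • (x+1) = x + 1/2 := by
    simp [smul_eq_mul]; ring
  rw [hmid] at h
  simp only [Function.comp_apply, smul_eq_mul] at h
  have hg1 : 0 < Gamma x := Real.Gamma_pos_of_pos hx
  have hg2 : 0 < Gamma (x+1) := Real.Gamma_pos_of_pos h1
  have hg3 : 0 < Gamma (x+1/2) := Real.Gamma_pos_of_pos (by linarith)
  have h2 : Real.log (Gamma (x+1/2) ^ 2) ≤ Real.log (Gamma x * Gamma (x+1)) := by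
    rw [Real.log_pow, Real.log_mul hg1.ne' hg2.ne']
    push_cast
    linarith
  exact (Real.log_le_log_iff (by positivity) (by positivity)).mp h2

/-- Iterated lower bound: `Γ(x+1)² ≥ (x + 1/4 - x/(4(x+m))) Γ(x+1/2)²` in cleared form. -/
lemma lemS (m : ℕ) : ∀ x : ℝ, 0 < x →
    (4*(x+m)*(x+1/4) - x) * Gamma (x+1/2)^2 ≤ 4*(x+m) * Gamma (x+1)^2 := by
  induction m with
  | zero =>
    intro x hx
    have hA := lemA hx
    have hgadd : Gamma (x+1) = x * Gamma x := Real.Gamma_add_one hx.ne'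
    have hg1 : 0 < Gamma x := Real.Gamma_pos_of_pos hx
    -- x * Γ(x+1/2)^2 ≤ x * Γ x * Γ(x+1) = Γ(x+1)^2
    have h2 : x * Gamma (x+1/2)^2 ≤ Gamma (x+1)^2 := by
      calc x * Gamma (x+1/2)^2 ≤ x * (Gamma x * Gamma (x+1)) := by
            exact mul_le_mul_of_nonneg_left hA hx.le
        _ = Gamma (x+1)^2 := by rw [hgadd]; ring
    push_cast
    nlinarith [sq_nonneg (Gamma (x+1/2)), hx]
  | succ m ih =>
    intro x hx
    have hx1 : (0:ℝ) < x + 1 := by linarith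
    have h := ih (x+1) hx1
    have e1 : Gamma (x+1+1) = (x+1) * Gamma (x+1) := Real.Gamma_add_one hx1.ne'
    have e2 : Gamma (x+1+1/2) = (x+1/2) * Gamma (x+1/2) := by
      have : x + 1 + 1/2 = (x + 1/2) + 1 := by ring
      rw [this, Real.Gamma_add_one (by linarith : (x:ℝ)+1/2 ≠ 0)]
    rw [e1, e2] at h
    -- h : (4*(x+1+m)*(x+1+1/4) - (x+1)) * ((x+1/2)*Γ(x+1/2))^2 ≤ 4*(x+1+m)*((x+1)*Γ(x+1))^2
    have hH : (0:ℝ) ≤ Gamma (x+1/2)^2 := sq_nonneg _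
    have hA : (0:ℝ) ≤ Gamma (x+1)^2 := sq_nonneg _
    have hm : (0:ℝ) ≤ (m:ℝ) := Nat.cast_nonneg m
    push_cast at h ⊢
    nlinarith [mul_nonneg hm hH, mul_pos hx1 hx1, sq_nonneg ((x+1) * Gamma (x+1))]

/-- Strict lower bound `Γ(x+1)² > (x+1/4) Γ(x+1/2)²`. -/
lemma lower_strict {x : ℝ} (hx : 0 < x) :
    (x + 1/4) * Gamma (x + 1/2)^2 < Gamma (x + 1)^2 := by
  obtain ⟨m, hm⟩ := exists_nat_gt (4 * x * (x+1)^2)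
  have hx1 : (0:ℝ) < x + 1 := by linarith
  have h := lemS m (x+1) hx1
  have e1 : Gamma (x+1+1) = (x+1) * Gamma (x+1) := Real.Gamma_add_one hx1.ne'
  have e2 : Gamma (x+1+1/2) = (x+1/2) * Gamma (x+1/2) := by
    have : x + 1 + 1/2 = (x + 1/2) + 1 := by ring
    rw [this, Real.Gamma_add_one (by linarith : (x:ℝ)+1/2 ≠ 0)]
  rw [e1, e2] at h
  have hH : (0:ℝ) < Gamma (x+1/2)^2 := by
    have := Real.Gamma_pos_of_pos (by linarith : (0:ℝ) < x + 1/2); positivity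
  have hA : (0:ℝ) ≤ Gamma (x+1)^2 := sq_nonneg _
  -- C1 - (x+1/4)*4(x+1+m)(x+1)^2 = m/4 - x(x+1)^2 > 0
  have hc : (0:ℝ) < (m:ℝ)/4 - x*(x+1)^2 := by nlinarith
  have hP : (0:ℝ) < 4*(x+1+(m:ℝ))*(x+1)^2 := by positivity
  have h2 : (4*(x+1+(m:ℝ))*(x+1)^2) * ((x + 1/4) * Gamma (x + 1/2)^2)
      < (4*(x+1+(m:ℝ))*(x+1)^2) * (Gamma (x + 1)^2) := by
    nlinarith [mul_pos hc hH]
  exact lt_of_mul_lt_mul_left h2 hP.le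

/-- For all real `n > 0`, `√(n + 1/4) < Γ(n+1)/Γ(n+1/2) < √(n + 1/2)`. -/
theorem gamma_ratio_sqrt_bounds (n : ℝ) (hn : 0 < n) :
    Real.sqrt (n + 1 / 4) < Gamma (n + 1) / Gamma (n + 1 / 2) ∧
      Gamma (n + 1) / Gamma (n + 1 / 2) < Real.sqrt (n + 1 / 2) := by
  have hH : (0:ℝ) < Gamma (n + 1/2) := Real.Gamma_pos_of_pos (by linarith)
  have hA : (0:ℝ) < Gamma (n + 1) := Real.Gamma_pos_of_pos (by linarith)
  have hg : 0 < Gamma (n+1) / Gamma (n+1/2) := div_pos hA hH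
  constructor
  · rw [Real.sqrt_lt' hg]
    have h := lower_strict hn
    rw [div_pow, lt_div_iff₀ (by positivity)]
    linarith
  · rw [Real.lt_sqrt (by positivity)]
    have h := lower_strict (by linarith : (0:ℝ) < n + 1/2)
    have e2 : Gamma (n+1/2+1) = (n+1/2) * Gamma (n+1/2) :=
      Real.Gamma_add_one (by linarith : (n:ℝ)+1/2 ≠ 0)
    have e3 : n+1/2+1/2 = n+1 := by ring
    rw [e2, e3] at h
    rw [div_pow, div_lt_iff₀ (by positivity)]
    nlinarith [sq_nonneg (Gamma (n+1)), mul_pos hH hH]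
end

section
/- For all real x > 1, Γ(x) < x^{x − 1/2} / e^{x − 1}. -/
open Real Set Filter Topology Finset

namespace GammaBoundAux

noncomputable def f : ℝ → ℝ := Real.log ∘ Real.Gamma

lemma f_diff {x : ℝ} (hx : 0 < x) : DifferentiableAt ℝ f x := by
  refine ((Real.differentiableAt_Gamma ?_).log (Real.Gamma_ne_zero ?_)) <;>
  exact fun m ↦ ne_of_gt (lt_of_le_of_lt (neg_nonpos.mpr (Nat.cast_nonneg m)) hx)

lemma f_rec {x : ℝ} (hx : 0 < x) : f (x + 1) = f x + Real.log x := by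
  simp only [f, Function.comp_apply, Real.Gamma_add_one hx.ne',
    Real.log_mul hx.ne' (Real.Gamma_pos_of_pos hx).ne', add_comm]

lemma f_deriv_rec {x : ℝ} (hx : 0 < x) : deriv f (x + 1) = deriv f x + 1 / x := by
  rw [← deriv_comp_add_const, one_div, ← Real.deriv_log,
    ← deriv_add (f_diff (by positivity)) (Real.differentiableAt_log hx.ne')]
  apply Filter.EventuallyEq.deriv_eq
  filter_upwards [eventually_gt_nhds hx] using fun y hy => f_rec hy

lemma f_deriv_sum (x : ℝ) (hx : 0 < x) (n : ℕ) :
    deriv f (x + n) = deriv f x + ∑ k ∈ Finset.range n, 1 / (x + k) := by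
  induction n with
  | zero => simp
  | succ n ih =>
    have h1 : x + (n + 1 : ℕ) = (x + n) + 1 := by push_cast; ring
    rw [h1, f_deriv_rec (by positivity), ih, Finset.sum_range_succ]
    ring

/-- slope bound: deriv f y ≤ log y -/
lemma f_deriv_le_log {y : ℝ} (hy : 0 < y) : deriv f y ≤ Real.log y := by
  have h := Real.convexOn_log_Gamma.deriv_le_slope (Set.mem_Ioi.mpr hy)
    (Set.mem_Ioi.mpr (by linarith : (0:ℝ) < y + 1)) (by linarith) (f_diff hy)
  rw [slope_def_field] at h
  calc deriv f y ≤ (f (y+1) - f y) / (y + 1 - y) := h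
    _ = Real.log y := by rw [f_rec hy]; field_simp; ring

/-- key elementary inequality -/
lemma term_gt {t : ℝ} (ht : 0 < t) :
    1 / (2*t) - 1 / (2*(t+1)) < 1 / t - (Real.log (t+1) - Real.log t) := by
  have h1 : Real.log (t+1) - Real.log t = Real.log (1 + 1/t) := by
    rw [← Real.log_div (by positivity) ht.ne']; congr 1; field_simp
  set u : ℝ := 1/t with hu
  have hu0 : 0 < u := by positivity
  have hy : 0 < Real.log (1 + u) := Real.log_pos (by linarith)
  have hsinh := Real.self_lt_sinh_iff.mpr hy
  rw [Real.sinh_eq, Real.exp_log (by linarith), Real.exp_neg, Real.exp_log (by linarith)] at hsinh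
  have key : u - Real.log (1 + u) > u^2 / (2*(1+u)) := by
    have : (1 + u - (1+u)⁻¹)/2 = u - u^2/(2*(1+u)) := by field_simp; ring
    rw [this] at hsinh; linarith
  have h2 : u^2/(2*(1+u)) = 1/(2*t) - 1/(2*(t+1)) := by
    rw [hu]; field_simp; ring
  rw [h1]; rw [h2] at key; linarith

lemma f_deriv_lt (x : ℝ) (hx : 0 < x) : deriv f x < Real.log x - 1 / (2*x) := by
  set ε : ℝ := (1/x - (Real.log (x+1) - Real.log x)) - (1/(2*x) - 1/(2*(x+1))) with hε
  have hε0 : 0 < ε := by have := term_gt hx; rw [hε]; linarith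
  obtain ⟨m, hm⟩ := exists_nat_gt (1/(2*ε))
  set n : ℕ := m + 1 with hn
  have hxn : 0 < x + n := by positivity
  have hnm : 1/(2*ε) < (n:ℝ) := by
    rw [hn]; push_cast; linarith [Nat.cast_nonneg (α := ℝ) m]
  have hεn : 1/(2*(x+n)) < ε := by
    rw [div_lt_iff₀ (by positivity)]
    rw [div_lt_iff₀ (by positivity)] at hm
    have h1 : (m:ℝ) < x + n := by rw [hn]; push_cast; linarith
    nlinarith
  -- telescoping identities
  have hlogsum : ∑ k ∈ Finset.range n, (Real.log (x+k+1) - Real.log (x+k))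
      = Real.log (x+n) - Real.log x := by
    have := Finset.sum_range_sub (fun k : ℕ => Real.log (x + k)) n
    simp only [Nat.cast_add, Nat.cast_one] at this ⊢
    convert this using 2 with k
    · push_cast; ring_nf
    · simp
  set g : ℕ → ℝ := fun k => 1/(x+k) - (Real.log (x+k+1) - Real.log (x+k)) with hg
  have hT : ∑ k ∈ Finset.range n, (1:ℝ)/(x+k)
      = (∑ k ∈ Finset.range n, g k) + (Real.log (x+n) - Real.log x) := by
    rw [← hlogsum, ← Finset.sum_add_distrib]
    exact Finset.sum_congr rfl (fun k _ => by rw [hg]; ring)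
  set h : ℕ → ℝ := fun i => 1/(2*(x+1+i)) with hh
  have hstep : ∀ i ∈ Finset.range m, h i - h (i+1) ≤ g (i+1) := by
    intro i _
    have ht : (0:ℝ) < x + 1 + i := by positivity
    have key := (term_gt ht).le
    simp only [hg, hh]
    push_cast
    ring_nf at key ⊢
    linarith
  have hge : ∑ i ∈ Finset.range m, (h i - h (i+1)) ≤ ∑ i ∈ Finset.range m, g (i+1) :=
    Finset.sum_le_sum hstep
  rw [Finset.sum_range_sub' h m] at hge
  have hTlb : g 0 + (h 0 - h m) ≤ ∑ k ∈ Finset.range n, g k := by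
    rw [hn, Finset.sum_range_succ']
    linarith
  have hsum := f_deriv_sum x hx n
  have hub := f_deriv_le_log hxn
  have hg0 : g 0 = 1/x - (Real.log (x+1) - Real.log x) := by
    simp [hg]
  have hh0 : h 0 = 1/(2*(x+1)) := by simp [hh]
  have hhm : h m = 1/(2*(x+n)) := by
    simp only [hh, hn]; push_cast; ring_nf
  rw [hT] at hsum
  rw [hg0] at hTlb
  rw [hh0, hhm] at hTlb
  have hεe : 1/x - (Real.log (x+1) - Real.log x)
      = ε + (1/(2*x) - 1/(2*(x+1))) := by rw [hε]; ring
  rw [hεe] at hTlb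
  linarith

noncomputable def φ : ℝ → ℝ := fun x => (x - 1/2) * Real.log x - x + 1 - f x

lemma φ_hasDeriv {x : ℝ} (hx : 0 < x) :
    HasDerivAt φ ((Real.log x + (x - 1/2) * (1/x) - 1) - deriv f x) x := by
  have h1 : HasDerivAt (fun y : ℝ => (y - 1/2) * Real.log y)
      (1 * Real.log x + (x - 1/2) * x⁻¹) x := by
    exact (((hasDerivAt_id x).sub_const (1/2)).mul (Real.hasDerivAt_log hx.ne'))
  have h2 := ((h1.sub (hasDerivAt_id x)).add_const 1).sub ((f_diff hx).hasDerivAt)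
  exact h2.congr_deriv (by ring)

end GammaBoundAux

open GammaBoundAux

/-- For all real `x > 1`, `Γ(x) < x^(x - 1/2) / e^(x - 1)`. -/
theorem gamma_lt_rpow_div_exp (x : ℝ) (hx : 1 < x) :
    Gamma x < x ^ (x - 1 / 2) / Real.exp (x - 1) := by
  have hx0 : (0:ℝ) < x := by linarith
  have hmono : StrictMonoOn φ (Set.Ici 1) := by
    apply strictMonoOn_of_deriv_pos (convex_Ici 1)
    · intro y hy
      exact ((φ_hasDeriv (lt_of_lt_of_le one_pos hy)).differentiableAt.continuousAt).continuousWithinAt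
    · intro y hy
      rw [interior_Ici] at hy
      have hy0 : (0:ℝ) < y := lt_trans one_pos hy
      rw [(φ_hasDeriv hy0).deriv]
      have hd := f_deriv_lt y hy0
      have : Real.log y + (y - 1/2) * (1/y) - 1 = Real.log y - 1/(2*y) := by
        field_simp; ring
      rw [this]
      linarith
  have hφ1 : φ 1 = 0 := by
    simp [φ, f, Real.Gamma_one]
  have hlt := hmono (Set.mem_Ici.mpr le_rfl) (Set.mem_Ici.mpr hx.le) hx
  rw [hφ1] at hlt
  have hf : f x < (x - 1/2) * Real.log x - x + 1 := by
    simp only [φ] at hlt; linarith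
  have hΓ : Real.Gamma x = Real.exp (f x) := by
    rw [f, Function.comp_apply, Real.exp_log (Real.Gamma_pos_of_pos hx0)]
  rw [hΓ]
  calc Real.exp (f x) < Real.exp ((x - 1/2) * Real.log x - x + 1) := Real.exp_lt_exp.mpr hf
    _ = x ^ (x - 1/2) / Real.exp (x - 1) := by
        rw [Real.rpow_def_of_pos hx0, ← Real.exp_sub]
        congr 1
        ring
end

section
/- Let M > 2 and 1 < q < M − 3/2. Then E[U^q] = (Γ(M/2)/Γ((M−1)/2))·(Γ((M−q−1)/2)/Γ((M−q)/2)) < √(M−1)/√(M − q − 3/2). -/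
open Real Set

lemma gamma_midpoint {y : ℝ} (hy : 0 < y) :
    Gamma (y + 1/2) ^ 2 ≤ Gamma y * Gamma (y + 1) := by
  have h := Real.convexOn_log_Gamma.2 (mem_Ioi.2 hy)
      (mem_Ioi.2 (by linarith : (0:ℝ) < y + 1))
      (by norm_num : (0:ℝ) ≤ 1/2) (by norm_num : (0:ℝ) ≤ 1/2)
      (by norm_num : (1:ℝ)/2 + 1/2 = 1)
  simp only [Function.comp_apply, smul_eq_mul] at h
  have h2 : (1/2 : ℝ) * y + 1/2 * (y+1) = y + 1/2 := by ring
  rw [h2] at h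
  have hpos : 0 < Gamma (y + 1/2) := Gamma_pos_of_pos (by linarith)
  have hpos1 : 0 < Gamma y := Gamma_pos_of_pos hy
  have hpos2 : 0 < Gamma (y + 1) := Gamma_pos_of_pos (by linarith)
  have key : log (Gamma (y+1/2)^2) ≤ log (Gamma y * Gamma (y+1)) := by
    rw [Real.log_pow, Real.log_mul hpos1.ne' hpos2.ne']
    push_cast
    linarith
  exact (Real.log_le_log_iff (by positivity) (by positivity)).1 key

/-- Cauchy–Schwarz lower bound: `x · Γ(x+1/2)² ≤ Γ(x+1)²` for `x > 0`. -/
lemma gamma_ratio_lower0 {x : ℝ} (hx : 0 < x) :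
    x * Gamma (x + 1/2) ^ 2 ≤ Gamma (x + 1) ^ 2 := by
  have h := gamma_midpoint hx
  have hrec : Gamma (x + 1) = x * Gamma x := Real.Gamma_add_one hx.ne'
  have hpos : 0 < Gamma x := Gamma_pos_of_pos hx
  calc x * Gamma (x + 1/2) ^ 2 ≤ x * (Gamma x * Gamma (x+1)) := by nlinarith
    _ = Gamma (x+1) ^ 2 := by rw [hrec]; ring

/-- Upper bound: `Γ(x+1)² ≤ (x+1/2) · Γ(x+1/2)²` for `x > 0`. -/
lemma gamma_ratio_upper {x : ℝ} (hx : 0 < x) :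
    Gamma (x + 1) ^ 2 ≤ (x + 1/2) * Gamma (x + 1/2) ^ 2 := by
  have h := gamma_midpoint (y := x + 1/2) (by linarith)
  have e1 : x + 1/2 + 1/2 = x + 1 := by ring
  have e2 : x + 1/2 + 1 = (x + 1/2) + 1 := by ring
  rw [e1, e2, Real.Gamma_add_one (by positivity : (x+1/2:ℝ) ≠ 0)] at h
  nlinarith [Gamma_pos_of_pos (by linarith : (0:ℝ) < x + 1/2)]

/-- Inductive improvement towards Watson's bound (division-free form). -/
lemma gamma_watson_aux (n : ℕ) :
    ∀ x : ℝ, 0 < x →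
      ((x + 1/4) * (x + n + 1/2) - (1/4) * (x + 1/2)) * Gamma (x + 1/2) ^ 2
        ≤ (x + n + 1/2) * Gamma (x + 1) ^ 2 := by
  induction n with
  | zero =>
      intro x hx
      have h := gamma_ratio_lower0 hx
      have e : ((x + 1/4) * (x + (0:ℕ) + 1/2) - (1/4) * (x + 1/2))
          = x * (x + 1/2) := by push_cast; ring
      rw [e]
      push_cast
      nlinarith [sq_nonneg (Gamma (x + 1/2)), hx]
  | succ n ih =>
      intro x hx
      have h1 := ih (x + 1) (by linarith)
      have e1 : x + 1 + 1/2 = (x + 1/2) + 1 := by ring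
      rw [e1, Real.Gamma_add_one (by positivity : (x+1/2:ℝ) ≠ 0),
        show x + 1 + 1 = (x + 1) + 1 by ring,
        Real.Gamma_add_one (by positivity : (x+1:ℝ) ≠ 0)] at h1
      set G := Gamma (x + 1/2) with hG
      set H := Gamma (x + 1) with hH
      have hGpos : 0 < G := Gamma_pos_of_pos (by linarith)
      have hHpos : 0 < H := Gamma_pos_of_pos (by linarith)
      set D : ℝ := x + 1 + n + 1/2 with hD
      have hDpos : 0 < D := by positivity
      -- h1 : ((x+1+1/4)*D - (1/4)*(x+1+1/2)) * ((x+1/2)*G)^2 ≤ D * ((x+1)*H)^2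
      have egoal : x + ((n+1:ℕ):ℝ) + 1/2 = D := by rw [hD]; push_cast; ring
      rw [egoal]
      have key : ((x + 1/4) * D - (1/4) * (x + 1/2)) * (x+1)^2
          ≤ ((x + 1 + 1/4) * D - (1/4) * (x + 1 + 1/2)) * (x+1/2)^2 := by
        nlinarith [hDpos, hx]
      have h3 : ((x + 1/4) * D - (1/4) * (x + 1/2)) * G^2 * (x+1)^2
          ≤ D * H^2 * (x+1)^2 := by
        nlinarith [mul_le_mul_of_nonneg_right key (sq_nonneg G)]
      exact (mul_le_mul_iff_of_pos_right (by positivity : (0:ℝ) < (x+1)^2)).1 h3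

/-- Watson's lower bound, weak form: `(x+1/4)·Γ(x+1/2)² ≤ Γ(x+1)²` for `x > 0`. -/
lemma gamma_watson_le {x : ℝ} (hx : 0 < x) :
    (x + 1/4) * Gamma (x + 1/2) ^ 2 ≤ Gamma (x + 1) ^ 2 := by
  have hGpos : 0 < Gamma (x + 1/2) := Gamma_pos_of_pos (by linarith)
  refine le_of_forall_pos_le_add fun ε hε => ?_
  obtain ⟨n, hn⟩ := exists_nat_gt ((x + 1/2) * Gamma (x + 1/2) ^ 2 / (4 * ε))
  have h := gamma_watson_aux n x hx
  have hDpos : (0:ℝ) < x + n + 1/2 := by positivity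
  -- divide h by (x+n+1/2)
  have h2' : ((x + 1/4) * Gamma (x + 1/2) ^ 2 - Gamma (x + 1) ^ 2) * (x + n + 1/2)
      ≤ (1/4) * (x + 1/2) * Gamma (x + 1/2) ^ 2 := by nlinarith [h]
  have h2 := (le_div_iff₀ hDpos).2 h2'
  have h3 : (1/4) * (x + 1/2) * Gamma (x + 1/2) ^ 2 / (x + n + 1/2) ≤ ε := by
    rw [div_le_iff₀ hDpos]
    have : (x + 1/2) * Gamma (x + 1/2) ^ 2 < 4 * ε * n := by
      rw [div_lt_iff₀ (by positivity : (0:ℝ) < 4 * ε)] at hn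
      linarith
    nlinarith [hε.le, hx]
  linarith

/-- Watson's lower bound, strict: `(x+1/4)·Γ(x+1/2)² < Γ(x+1)²` for `x > -1/4`. -/
lemma gamma_watson_lt {x : ℝ} (hx : -1/4 < x) :
    (x + 1/4) * Gamma (x + 1/2) ^ 2 < Gamma (x + 1) ^ 2 := by
  have h := gamma_watson_le (x := x + 1) (by linarith)
  rw [show x + 1 + 1/2 = (x + 1/2) + 1 by ring,
    Real.Gamma_add_one (by intro h0; nlinarith [h0] : (x+1/2:ℝ) ≠ 0),
    show x + 1 + 1 = (x + 1) + 1 by ring,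
    Real.Gamma_add_one (by intro h0; nlinarith [h0] : (x+1:ℝ) ≠ 0)] at h
  have hGpos : 0 < Gamma (x + 1/2) := Gamma_pos_of_pos (by linarith)
  have key : (x + 1/4) * (x+1)^2 < (x + 1 + 1/4) * (x+1/2)^2 := by nlinarith
  have h3 : (x + 1/4) * Gamma (x + 1/2)^2 * (x+1)^2
      < Gamma (x + 1)^2 * (x+1)^2 := by
    nlinarith [mul_lt_mul_of_pos_right key (pow_pos hGpos 2)]
  exact (mul_lt_mul_iff_of_pos_right (by nlinarith : (0:ℝ) < (x+1)^2)).1 h3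

/-- For `M > 2` and `1 < q < M - 3/2`,
`(Γ(M/2)/Γ((M-1)/2)) · (Γ((M-q-1)/2)/Γ((M-q)/2)) < √(M-1)/√(M-q-3/2)`. -/
theorem invSin_moment_bound (M q : ℝ) (hM : 2 < M) (hq1 : 1 < q) (hq2 : q < M - 3 / 2) :
    (Gamma (M / 2) / Gamma ((M - 1) / 2))
        * (Gamma ((M - q - 1) / 2) / Gamma ((M - q) / 2))
      < Real.sqrt (M - 1) / Real.sqrt (M - q - 3 / 2) := by
  have ht : 0 < M - q - 3/2 := by linarith
  have hg1 : 0 < Gamma (M / 2) := Gamma_pos_of_pos (by linarith)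
  have hg2 : 0 < Gamma ((M - 1) / 2) := Gamma_pos_of_pos (by linarith)
  have hg3 : 0 < Gamma ((M - q - 1) / 2) := Gamma_pos_of_pos (by linarith)
  have hg4 : 0 < Gamma ((M - q) / 2) := Gamma_pos_of_pos (by linarith)
  -- first factor
  have hA2 : Gamma (M/2) ^ 2 ≤ ((M-1)/2) * Gamma ((M-1)/2) ^ 2 := by
    have h := gamma_ratio_upper (x := (M-2)/2) (by linarith)
    rw [show (M-2)/2 + 1 = M/2 by ring, show (M-2)/2 + 1/2 = (M-1)/2 by ring] at h
    exact h
  have hA : Gamma (M / 2) / Gamma ((M - 1) / 2) ≤ Real.sqrt ((M-1)/2) := by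
    have hA2' : (Gamma (M / 2) / Gamma ((M - 1) / 2)) ^ 2 ≤ (M-1)/2 := by
      rw [div_pow, div_le_iff₀ (pow_pos hg2 2)]
      linarith
    calc Gamma (M / 2) / Gamma ((M - 1) / 2)
        = Real.sqrt ((Gamma (M / 2) / Gamma ((M - 1) / 2)) ^ 2) := by
          rw [Real.sqrt_sq (by positivity)]
      _ ≤ Real.sqrt ((M-1)/2) := Real.sqrt_le_sqrt hA2'
  -- second factor
  have hW : ((M - q - 3/2)/2) * Gamma ((M - q - 1) / 2) ^ 2 < Gamma ((M - q) / 2) ^ 2 := by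
    have h := gamma_watson_lt (x := (M - q - 2)/2) (by linarith)
    rw [show (M-q-2)/2 + 1/2 = (M-q-1)/2 by ring, show (M-q-2)/2 + 1 = (M-q)/2 by ring,
      show (M-q-2)/2 + 1/4 = (M-q-3/2)/2 by ring] at h
    exact h
  set s : ℝ := Real.sqrt ((M - q - 3/2)/2) with hs
  have hspos : 0 < s := Real.sqrt_pos.2 (by linarith)
  have hslt : s * Gamma ((M - q - 1) / 2) < Gamma ((M - q) / 2) := by
    have hsq : (s * Gamma ((M - q - 1) / 2)) ^ 2 < Gamma ((M - q) / 2) ^ 2 := by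
      rw [mul_pow, hs, Real.sq_sqrt (by linarith : (0:ℝ) ≤ (M - q - 3/2)/2)]
      exact hW
    exact lt_of_pow_lt_pow_left₀ 2 hg4.le hsq
  have hB : Gamma ((M - q - 1) / 2) / Gamma ((M - q) / 2) < 1 / s := by
    rw [div_lt_div_iff₀ hg4 hspos]
    linarith [hslt]
  -- combine
  have hcomb : (Gamma (M / 2) / Gamma ((M - 1) / 2))
      * (Gamma ((M - q - 1) / 2) / Gamma ((M - q) / 2))
      < Real.sqrt ((M-1)/2) * (1 / s) := by
    have hBpos : 0 < Gamma ((M - q - 1) / 2) / Gamma ((M - q) / 2) := by positivity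
    have hU : 0 < Real.sqrt ((M-1)/2) := Real.sqrt_pos.2 (by linarith)
    calc (Gamma (M / 2) / Gamma ((M - 1) / 2))
          * (Gamma ((M - q - 1) / 2) / Gamma ((M - q) / 2))
        ≤ Real.sqrt ((M-1)/2) * (Gamma ((M - q - 1) / 2) / Gamma ((M - q) / 2)) :=
          mul_le_mul_of_nonneg_right hA hBpos.le
      _ < Real.sqrt ((M-1)/2) * (1 / s) := by
          exact mul_lt_mul_of_pos_left hB hU
  have e1 : ((M-1)/2)/((M-q-3/2)/2) = (M-1)/(M-q-3/2) := by
    rw [div_div_div_cancel_right₀]; norm_num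
  have heq : Real.sqrt ((M-1)/2) * (1 / s) = Real.sqrt (M - 1) / Real.sqrt (M - q - 3/2) := by
    rw [mul_one_div, hs, ← Real.sqrt_div (by linarith : (0:ℝ) ≤ (M-1)/2), e1,
      Real.sqrt_div (by linarith : (0:ℝ) ≤ M - 1)]
  rw [← heq]
  exact hcomb
end

section
/- For a nonnegative random variable Υ and t > 0, the optimal moment bound is at least as good as the Cramér–Chernoff bound: inf over q > 0 of E[Υ^q]·t^{−q} is ≤ inf over λ > 0 of E[e^{λ(Υ−t)}], whenever both sides are defined. -/
open MeasureTheory Real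

private lemma exp_tsum (x : ℝ) : Real.exp x = ∑' n : ℕ, x ^ n / n.factorial := by
  rw [Real.exp_eq_exp_ℝ, NormedSpace.exp_eq_tsum_div]

private lemma rpow_le_max {x q : ℝ} (hx : 0 ≤ x) (hq0 : 0 < q) (hq1 : q ≤ 1) :
    x ^ q ≤ max 1 x := by
  rcases le_total x 1 with h | h
  · exact le_max_of_le_left (Real.rpow_le_one hx h hq0.le)
  · refine le_max_of_le_right ?_
    calc x ^ q ≤ x ^ (1 : ℝ) := Real.rpow_le_rpow_of_exponent_le h hq1
      _ = x := Real.rpow_one x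

private lemma term_eq {l t : ℝ} (hl : 0 < l) (ht : 0 < t) {x : ℝ} (k : ℕ) :
    ((l * t) ^ k / k.factorial * Real.exp (-(l * t))) * (x ^ (k : ℝ) * t ^ (-(k : ℝ)))
      = (l * x) ^ k / k.factorial * Real.exp (-(l * t)) := by
  have hx' : x ^ (k : ℝ) = x ^ k := Real.rpow_natCast x k
  have ht' : t ^ (-(k : ℝ)) = (t ^ k)⁻¹ := by
    rw [Real.rpow_neg ht.le, Real.rpow_natCast]
  have htk : (t : ℝ) ^ k ≠ 0 := pow_ne_zero _ ht.ne'
  rw [hx', ht', mul_pow, mul_pow]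
  field_simp

private lemma exp_expand {l t : ℝ} (hl : 0 < l) (ht : 0 < t) {x : ℝ} (hx : 0 ≤ x) :
    ENNReal.ofReal (Real.exp (l * (x - t)))
      = ∑' k : ℕ, ENNReal.ofReal ((l * t) ^ k / k.factorial * Real.exp (-(l * t)))
          * ENNReal.ofReal (x ^ (k : ℝ) * t ^ (-(k : ℝ))) := by
  have hsum0 : Summable (fun k : ℕ => (l * x) ^ k / k.factorial * Real.exp (-(l * t))) :=
    (Real.summable_pow_div_factorial (l * x)).mul_right _
  have hsum : Summable (fun k : ℕ =>
      ((l * t) ^ k / k.factorial * Real.exp (-(l * t))) * (x ^ (k : ℝ) * t ^ (-(k : ℝ)))) :=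
    hsum0.congr fun k => (term_eq hl ht k).symm
  have h1 : Real.exp (l * (x - t)) = ∑' k : ℕ,
      ((l * t) ^ k / k.factorial * Real.exp (-(l * t))) * (x ^ (k : ℝ) * t ^ (-(k : ℝ))) := by
    have : l * (x - t) = l * x + -(l * t) := by ring
    rw [this, Real.exp_add, exp_tsum (l * x), ← tsum_mul_right]
    exact (tsum_congr fun k => term_eq hl ht k).symm
  have hnn : ∀ k : ℕ,
      0 ≤ ((l * t) ^ k / k.factorial * Real.exp (-(l * t))) * (x ^ (k : ℝ) * t ^ (-(k : ℝ))) := by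
    intro k
    have h1 : (0:ℝ) ≤ (l * t) ^ k / k.factorial := by positivity
    have h2 : (0:ℝ) ≤ x ^ (k : ℝ) := Real.rpow_nonneg hx _
    have h3 : (0:ℝ) ≤ t ^ (-(k : ℝ)) := Real.rpow_nonneg ht.le _
    positivity
  rw [h1, ENNReal.ofReal_tsum_of_nonneg hnn hsum]
  refine tsum_congr fun k => ?_
  rw [ENNReal.ofReal_mul (by positivity)]

/-- The optimal moment bound is at least as good as the Cramér–Chernoff bound:
for a nonnegative random variable `Υ` and `t > 0`,
`inf_{q>0} E[Υ^q]·t^{−q} ≤ inf_{λ>0} E[e^{λ(Υ−t)}]`. -/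
theorem moment_bound_le_chernoff {Ω : Type*} [MeasurableSpace Ω]
    (ℙ : Measure Ω) [IsProbabilityMeasure ℙ]
    (Y : Ω → ℝ) (hY : Measurable Y) (hYpos : ∀ ω, 0 ≤ Y ω) (t : ℝ) (ht : 0 < t) :
    (⨅ q ∈ Set.Ioi (0 : ℝ), ∫⁻ ω, ENNReal.ofReal ((Y ω) ^ q * t ^ (-q)) ∂ℙ)
      ≤ ⨅ l ∈ Set.Ioi (0 : ℝ), ∫⁻ ω, ENNReal.ofReal (Real.exp (l * (Y ω - t))) ∂ℙ := by
  set m := ⨅ q ∈ Set.Ioi (0 : ℝ), ∫⁻ ω, ENNReal.ofReal ((Y ω) ^ q * t ^ (-q)) ∂ℙ with hm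
  refine le_iInf₂ fun l hl => ?_
  replace hl : 0 < l := hl
  set B := ∫⁻ ω, ENNReal.ofReal (Y ω) ∂ℙ with hB
  rcases eq_or_ne B ⊤ with hBtop | hBfin
  · -- `E[Y] = ∞`: the Chernoff side is infinite.
    have hc : (0:ℝ) < Real.exp (-(l * t)) * l := by positivity
    have hpt : ∀ ω, ENNReal.ofReal (Real.exp (-(l * t)) * l) * ENNReal.ofReal (Y ω)
        ≤ ENNReal.ofReal (Real.exp (l * (Y ω - t))) := by
      intro ω
      rw [← ENNReal.ofReal_mul hc.le]
      apply ENNReal.ofReal_le_ofReal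
      have h1 : l * Y ω ≤ Real.exp (l * Y ω) := by
        linarith [Real.add_one_le_exp (l * Y ω)]
      have h2 : l * (Y ω - t) = l * Y ω + -(l * t) := by ring
      rw [h2, Real.exp_add]
      have := mul_le_mul_of_nonneg_right h1 (Real.exp_pos (-(l * t))).le
      nlinarith [Real.exp_pos (-(l * t))]
    have htop : (⊤ : ENNReal) ≤ ∫⁻ ω, ENNReal.ofReal (Real.exp (l * (Y ω - t))) ∂ℙ := by
      calc (⊤ : ENNReal) = ENNReal.ofReal (Real.exp (-(l * t)) * l) * B := by
            rw [hBtop, ENNReal.mul_top (by simp [ENNReal.ofReal_eq_zero, not_le, hc])]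
        _ = ∫⁻ ω, ENNReal.ofReal (Real.exp (-(l * t)) * l) * ENNReal.ofReal (Y ω) ∂ℙ :=
            (lintegral_const_mul _ hY.ennreal_ofReal).symm
        _ ≤ _ := lintegral_mono hpt
    exact le_top.trans htop
  · -- `E[Y] < ∞`.
    -- Step 1: `m ≤ 1` by dominated convergence as `q → 0⁺`.
    have hFmeas : ∀ c : ℝ, Measurable fun ω => ENNReal.ofReal (Y ω ^ c * t ^ (-c)) := by
      intro c
      have : Measurable fun ω => Y ω ^ c := by fun_prop
      exact (this.mul_const _).ennreal_ofReal
    have hm1 : m ≤ 1 := by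
      set q : ℕ → ℝ := fun n => 1 / (n + 1) with hq
      have hqpos : ∀ n, 0 < q n := fun n => by positivity
      have hqle1 : ∀ n, q n ≤ 1 := by
        intro n
        rw [hq]
        rw [div_le_one (by positivity)]
        linarith [Nat.cast_nonneg (α := ℝ) n]
      have hq0 : Filter.Tendsto q Filter.atTop (nhds 0) :=
        tendsto_one_div_add_atTop_nhds_zero_nat
      set f : Ω → ENNReal := fun ω => if Y ω = 0 then 0 else 1 with hf
      set bound : Ω → ENNReal := fun ω => ENNReal.ofReal (max 1 t⁻¹) * (1 + ENNReal.ofReal (Y ω))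
        with hbound_def
      have h_bound : ∀ n, (fun ω => ENNReal.ofReal (Y ω ^ q n * t ^ (-(q n)))) ≤ᵐ[ℙ] bound := by
        intro n
        refine Filter.Eventually.of_forall fun ω => ?_
        have h1 : Y ω ^ q n ≤ 1 + Y ω := by
          refine (rpow_le_max (hYpos ω) (hqpos n) (hqle1 n)).trans ?_
          exact max_le (by linarith [hYpos ω]) (by linarith)
        have h2 : t ^ (-(q n)) ≤ max 1 t⁻¹ := by
          rw [Real.rpow_neg ht.le, ← Real.inv_rpow ht.le]
          exact rpow_le_max (by positivity) (hqpos n) (hqle1 n)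
        rw [hbound_def]
        have hmaxnn : (0:ℝ) ≤ max 1 t⁻¹ := le_trans zero_le_one (le_max_left _ _)
        calc ENNReal.ofReal (Y ω ^ q n * t ^ (-(q n)))
            ≤ ENNReal.ofReal (max 1 t⁻¹ * (1 + Y ω)) := by
              apply ENNReal.ofReal_le_ofReal
              rw [mul_comm (max 1 t⁻¹)]
              exact mul_le_mul h1 h2 (Real.rpow_nonneg ht.le _) (by linarith [hYpos ω])
          _ = ENNReal.ofReal (max 1 t⁻¹) * (1 + ENNReal.ofReal (Y ω)) := by
              rw [ENNReal.ofReal_mul hmaxnn,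
                ENNReal.ofReal_add zero_le_one (hYpos ω), ENNReal.ofReal_one]
      have h_fin : ∫⁻ ω, bound ω ∂ℙ ≠ ⊤ := by
        rw [hbound_def]
        rw [lintegral_const_mul (f := fun ω => 1 + ENNReal.ofReal (Y ω)) _
          (measurable_const.add hY.ennreal_ofReal)]
        rw [lintegral_add_left measurable_const, lintegral_const, measure_univ, mul_one]
        exact ENNReal.mul_ne_top ENNReal.ofReal_ne_top
          (ENNReal.add_ne_top.mpr ⟨ENNReal.one_ne_top, hBfin⟩)
      have h_lim : ∀ ω, Filter.Tendsto (fun n => ENNReal.ofReal (Y ω ^ q n * t ^ (-(q n))))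
          Filter.atTop (nhds (f ω)) := by
        intro ω
        rcases eq_or_lt_of_le (hYpos ω) with h0 | h0
        · have : ∀ n, ENNReal.ofReal (Y ω ^ q n * t ^ (-(q n))) = 0 := by
            intro n
            rw [← h0, Real.zero_rpow (hqpos n).ne', zero_mul, ENNReal.ofReal_zero]
          have hfω : f ω = 0 := by rw [hf]; simp [h0.symm]
          rw [hfω]
          exact Filter.Tendsto.congr (fun n => (this n).symm) tendsto_const_nhds
        · have hfω : f ω = 1 := by simp [hf, h0.ne']
          rw [hfω]
          have hcont : Continuous fun s : ℝ => Y ω ^ s * t ^ (-s) := by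
            simp only [Real.rpow_def_of_pos h0, Real.rpow_def_of_pos ht]
            fun_prop
          have := ((ENNReal.continuous_ofReal.comp hcont).tendsto 0).comp hq0
          simpa [Function.comp_def] using this
      have hconv := tendsto_lintegral_of_dominated_convergence bound
        (fun n => hFmeas (q n)) h_bound h_fin (Filter.Eventually.of_forall h_lim)
      have hle : m ≤ ∫⁻ ω, f ω ∂ℙ := by
        refine ge_of_tendsto hconv (Filter.Eventually.of_forall fun n => ?_)
        exact iInf₂_le (q n) (Set.mem_Ioi.mpr (hqpos n))
      refine hle.trans ?_
      calc ∫⁻ ω, f ω ∂ℙ ≤ ∫⁻ _, 1 ∂ℙ := by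
            refine lintegral_mono fun ω => ?_
            by_cases h : Y ω = 0 <;> simp [hf, h]
        _ = 1 := by rw [lintegral_one, measure_univ]
    -- Step 2: the convex-combination argument.
    set w : ℕ → ENNReal := fun k =>
      ENNReal.ofReal ((l * t) ^ k / k.factorial * Real.exp (-(l * t))) with hw
    set A : ℕ → ENNReal := fun k =>
      ∫⁻ ω, ENNReal.ofReal (Y ω ^ (k : ℝ) * t ^ (-(k : ℝ))) ∂ℙ with hA
    have hwnn : ∀ k : ℕ, (0:ℝ) ≤ (l * t) ^ k / k.factorial * Real.exp (-(l * t)) := by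
      intro k; positivity
    have hwsum : ∑' k, w k = 1 := by
      rw [hw, ← ENNReal.ofReal_tsum_of_nonneg hwnn
        ((Real.summable_pow_div_factorial (l * t)).mul_right _)]
      rw [tsum_mul_right, ← exp_tsum, ← Real.exp_add]
      simp
    have hmk : ∀ k : ℕ, m ≤ A k := by
      intro k
      rcases Nat.eq_zero_or_pos k with hk | hk
      · subst hk
        have : A 0 = 1 := by
          rw [hA]
          simp [Real.rpow_zero]
        rw [this]
        exact hm1
      · exact iInf₂_le (k : ℝ) (Set.mem_Ioi.mpr (by exact_mod_cast hk))
    calc m = (∑' k, w k) * m := by rw [hwsum, one_mul]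
      _ = ∑' k, w k * m := by rw [ENNReal.tsum_mul_right]
      _ ≤ ∑' k, w k * A k := ENNReal.tsum_le_tsum fun k => mul_le_mul_right (hmk k) _
      _ = ∑' k, ∫⁻ ω, w k * ENNReal.ofReal (Y ω ^ (k : ℝ) * t ^ (-(k : ℝ))) ∂ℙ := by
          refine tsum_congr fun k => ?_
          rw [hA, lintegral_const_mul _ (hFmeas _)]
      _ = ∫⁻ ω, ∑' k, w k * ENNReal.ofReal (Y ω ^ (k : ℝ) * t ^ (-(k : ℝ))) ∂ℙ :=
          (lintegral_tsum fun k => (measurable_const.mul (hFmeas _)).aemeasurable).symm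
      _ = ∫⁻ ω, ENNReal.ofReal (Real.exp (l * (Y ω - t))) ∂ℙ :=
          lintegral_congr fun ω => (exp_expand hl ht (hYpos ω)).symm
end

section
/- Consider the regularized empirical risk L(ω; D) = (1/n)Σᵢ ℓ(ω; dᵢ) + (Λ/(2n))‖ω‖₂², where each ℓ(·; d) is convex, differentiable, and L-Lipschitz in ω. If D and D′ are neighboring datasets differing in one record, and ω̂, ω̂′ are the respective minimizers, then ‖ω̂ − ω̂′‖₂ ≤ 2L/Λ. -/
open Real

open Real Set InnerProductSpace

/-- First-order condition for a convex differentiable function. -/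
lemma convex_grad_le {E : Type*} [NormedAddCommGroup E] [InnerProductSpace ℝ E] [CompleteSpace E]
    {f : E → ℝ} (hf : ConvexOn ℝ Set.univ f) {x gx : E} (hg : HasGradientAt f gx x) (y : E) :
    (inner ℝ gx (y - x) : ℝ) ≤ f y - f x := by
  have hline : HasDerivAt (fun t : ℝ => x + t • (y - x)) (y - x) 0 := by
    simpa using ((hasDerivAt_id (0:ℝ)).smul_const (y - x)).const_add x
  have h0 : x + (0:ℝ) • (y - x) = x := by simp
  have hfd := hg.hasFDerivAt
  rw [← h0] at hfd
  have hd : HasDerivAt (fun t : ℝ => f (x + t • (y - x))) (inner ℝ gx (y - x) : ℝ) 0 := by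
    have h := hfd.comp_hasDerivAt 0 hline
    simp only [Function.comp_def, InnerProductSpace.toDual_apply_apply] at h
    exact h
  rw [hasDerivAt_iff_tendsto_slope] at hd
  have htend := hd.mono_left (nhdsWithin_mono 0 (fun t ht => ne_of_gt ht : Set.Ioi (0:ℝ) ⊆ {0}ᶜ))
  refine le_of_tendsto htend ?_
  filter_upwards [Ioc_mem_nhdsGT_of_mem (by norm_num : (0:ℝ) ∈ Set.Ico 0 1)] with t ht
  have key : f (x + t • (y - x)) ≤ (1 - t) * f x + t * f y := by
    have hpt : x + t • (y - x) = (1 - t) • x + t • y := by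
      rw [smul_sub, sub_smul, one_smul]; abel
    rw [hpt]
    exact hf.2 (mem_univ x) (mem_univ y) (by linarith [ht.2]) ht.1.le (by ring)
  have : slope (fun t : ℝ => f (x + t • (y - x))) 0 t
      = (f (x + t • (y - x)) - f x) / t := by
    simp [slope_def_field]
  rw [this, div_le_iff₀ ht.1]
  nlinarith [key]

/-- Sums of convex functions are convex. -/
lemma convexOn_finset_sum' {E : Type*} [NormedAddCommGroup E] [InnerProductSpace ℝ E]
    {ι : Type*} (s : Finset ι) (f : ι → E → ℝ) (h : ∀ i ∈ s, ConvexOn ℝ Set.univ (f i)) :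
    ConvexOn ℝ Set.univ (fun x => ∑ i ∈ s, f i x) := by
  induction s using Finset.cons_induction with
  | empty => simpa using convexOn_const (0:ℝ) convex_univ
  | cons i s hi ih =>
      simp only [Finset.sum_cons]
      exact (h i (Finset.mem_cons_self i s)).add (ih fun j hj => h j (Finset.mem_cons_of_mem hj))

/-- Output-perturbation sensitivity for regularized convex ERM: if each loss
`loss(·; d)` is convex, differentiable with gradient bounded by `L`, and `D`, `D'` are
neighboring datasets, then the minimizers of the regularized empirical risks satisfy
`‖ω̂ − ω̂'‖₂ ≤ 2L/Λ`. -/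
theorem erm_output_sensitivity {E : Type*} [NormedAddCommGroup E] [InnerProductSpace ℝ E] [CompleteSpace E]
    {α : Type*} (n : ℕ) (hn : 0 < n) (Λ L : ℝ) (hΛ : 0 < Λ) (hL : 0 ≤ L)
    (loss : E → α → ℝ) (g : E → α → E)
    (hconv : ∀ a : α, ConvexOn ℝ Set.univ (fun ω => loss ω a))
    (hgrad : ∀ (a : α) (ω : E), HasGradientAt (fun ω => loss ω a) (g ω a) ω)
    (hLip : ∀ (a : α) (ω : E), ‖g ω a‖ ≤ L)
    (d d' : Fin n → α) (i₀ : Fin n) (hneighbor : ∀ i, i ≠ i₀ → d i = d' i)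
    (what what' : E)
    (hmin : ∀ ω : E,
      (1 / n : ℝ) * ∑ i, loss what (d i) + Λ / (2 * n) * ‖what‖ ^ 2
        ≤ (1 / n : ℝ) * ∑ i, loss ω (d i) + Λ / (2 * n) * ‖ω‖ ^ 2)
    (hmin' : ∀ ω : E,
      (1 / n : ℝ) * ∑ i, loss what' (d' i) + Λ / (2 * n) * ‖what'‖ ^ 2
        ≤ (1 / n : ℝ) * ∑ i, loss ω (d' i) + Λ / (2 * n) * ‖ω‖ ^ 2) :
    ‖what - what'‖ ≤ 2 * L / Λ := by
  have hm : (0:ℝ) < (n:ℝ) := by exact_mod_cast hn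
  set m : ℝ := (n:ℝ) with hmdef
  -- convex parts and their gradients
  set C : (Fin n → α) → E → ℝ := fun e ω => (1 / m) * ∑ i, loss ω (e i) with hC
  set G : (Fin n → α) → E → E := fun e ω => (1 / m) • ∑ i, g ω (e i) with hG
  have hCconv : ∀ e, ConvexOn ℝ Set.univ (C e) := by
    intro e
    have := (convexOn_finset_sum' Finset.univ (fun i ω => loss ω (e i))
      (fun i _ => hconv (e i))).smul (c := 1/m) (by positivity)
    simpa [hC, smul_eq_mul] using this
  have hCgrad : ∀ e x, HasGradientAt (C e) (G e x) x := by
    intro e x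
    have hsum : HasFDerivAt (fun ω => ∑ i, loss ω (e i))
        (∑ i, toDual ℝ E (g x (e i))) x :=
      HasFDerivAt.fun_sum fun i _ => (hgrad (e i) x).hasFDerivAt
    have h1 := hsum.const_mul (1 / m)
    have : toDual ℝ E (G e x) = (1 / m) • ∑ i, toDual ℝ E (g x (e i)) := by
      simp [hG, map_smul, map_sum]
    rw [HasGradientAt, HasGradientAtFilter, this]
    exact h1
  -- full objectives and gradient-zero at the minimizers
  have hFgrad : ∀ e x, HasFDerivAt (fun ω => C e ω + Λ / (2 * m) * ‖ω‖ ^ 2)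
      (toDual ℝ E (G e x + (Λ / m) • x)) x := by
    intro e x
    have hq := ((hasStrictFDerivAt_norm_sq x).hasFDerivAt).const_mul (Λ / (2 * m))
    have := ((hCgrad e x).hasFDerivAt).add hq
    have this : HasFDerivAt (fun ω => C e ω + Λ / (2 * m) * ‖ω‖ ^ 2) _ x := this
    convert this using 1
    · rfl
    ext v
    simp only [map_add, ContinuousLinearMap.add_apply, ContinuousLinearMap.smul_apply,
      InnerProductSpace.toDual_apply_apply, inner_add_left, inner_smul_left, RCLike.conj_to_real,
      innerSL_apply_apply, smul_eq_mul]
    have hmne : m ≠ 0 := hm.ne'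
    field_simp
    ring
  have hzero : ∀ (e : Fin n → α) (x : E),
      (∀ ω : E, (1 / m) * ∑ i, loss x (e i) + Λ / (2 * m) * ‖x‖ ^ 2
        ≤ (1 / m) * ∑ i, loss ω (e i) + Λ / (2 * m) * ‖ω‖ ^ 2) →
      G e x + (Λ / m) • x = 0 := by
    intro e x hx
    have hloc : IsLocalMin (fun ω => C e ω + Λ / (2 * m) * ‖ω‖ ^ 2) x :=
      Filter.Eventually.of_forall hx
    have := hloc.hasFDerivAt_eq_zero (hFgrad e x)
    exact (toDual ℝ E).injective (by rw [this, map_zero])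
  have hA : G d what + (Λ / m) • what = 0 := hzero d what hmin
  have hB : G d' what' + (Λ / m) • what' = 0 := hzero d' what' hmin'
  -- gradient monotonicity for the D-objective's convex part
  have mono1 := convex_grad_le (hCconv d) (hCgrad d what) what'
  have mono2 := convex_grad_le (hCconv d) (hCgrad d what') what
  have hmono : (0:ℝ) ≤ inner ℝ (G d what - G d what') (what - what') := by
    have := add_le_add mono1 mono2
    rw [inner_sub_left]
    have h2 : (inner ℝ (G d what) (what' - what) : ℝ) = - inner ℝ (G d what) (what - what') := by
      rw [← inner_neg_right]; congr 1; abel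
    linarith [h2 ▸ this]
  -- the perturbation vector
  set evec : E := (1 / m) • (g what' (d i₀) - g what' (d' i₀)) with hevec
  have hsumdiff : ∑ i, (g what' (d i) - g what' (d' i))
      = g what' (d i₀) - g what' (d' i₀) := by
    rw [Finset.sum_eq_single i₀]
    · intro j _ hj
      rw [hneighbor j hj, sub_self]
    · intro h; exact absurd (Finset.mem_univ i₀) h
  have hGdiff : G d what' - G d' what' = evec := by
    rw [hG, hevec]
    simp only [← smul_sub, ← Finset.sum_sub_distrib, hsumdiff]
  -- rewrite the monotonicity inequality
  have h1 : G d what = -((Λ / m) • what) := eq_neg_of_add_eq_zero_left hA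
  have h2 : G d' what' = -((Λ / m) • what') := eq_neg_of_add_eq_zero_left hB
  have hsub : G d what - G d what' = -((Λ / m) • (what - what')) - evec := by
    have : G d what' = -((Λ / m) • what') + evec := by
      have := hGdiff
      rw [h2, sub_eq_iff_eq_add] at this
      rw [this]; abel
    rw [h1, this, smul_sub]
    abel
  rw [hsub, inner_sub_left, inner_neg_left, real_inner_smul_left,
    real_inner_self_eq_norm_sq] at hmono
  -- bound on the perturbation vector
  have henorm : ‖evec‖ ≤ 2 * L / m := by
    rw [hevec, norm_smul]
    have : ‖g what' (d i₀) - g what' (d' i₀)‖ ≤ 2 * L := by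
      calc ‖g what' (d i₀) - g what' (d' i₀)‖
          ≤ ‖g what' (d i₀)‖ + ‖g what' (d' i₀)‖ := norm_sub_le _ _
        _ ≤ 2 * L := by linarith [hLip (d i₀) what', hLip (d' i₀) what']
    calc ‖(1 / m : ℝ)‖ * ‖g what' (d i₀) - g what' (d' i₀)‖
        ≤ ‖(1 / m : ℝ)‖ * (2 * L) := by
          apply mul_le_mul_of_nonneg_left this (norm_nonneg _)
      _ = 2 * L / m := by
          rw [Real.norm_eq_abs, abs_of_pos (by positivity : (0:ℝ) < 1 / m)]
          ring
  -- conclude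
  have hip : - (inner ℝ evec (what - what') : ℝ) ≤ (2 * L / m) * ‖what - what'‖ := by
    have h3 := abs_real_inner_le_norm evec (what - what')
    have h4 : ‖evec‖ * ‖what - what'‖ ≤ (2 * L / m) * ‖what - what'‖ :=
      mul_le_mul_of_nonneg_right henorm (norm_nonneg _)
    calc - (inner ℝ evec (what - what') : ℝ) ≤ |(inner ℝ evec (what - what') : ℝ)| := neg_le_abs _
      _ ≤ ‖evec‖ * ‖what - what'‖ := h3
      _ ≤ _ := h4
  have hkey : Λ * ‖what - what'‖ ^ 2 ≤ 2 * L * ‖what - what'‖ := by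
    have h5 : (Λ / m) * ‖what - what'‖ ^ 2 ≤ (2 * L / m) * ‖what - what'‖ := by linarith
    have h6 := mul_le_mul_of_nonneg_left h5 hm.le
    calc Λ * ‖what - what'‖ ^ 2 = m * ((Λ / m) * ‖what - what'‖ ^ 2) := by
          field_simp
      _ ≤ m * ((2 * L / m) * ‖what - what'‖) := h6
      _ = 2 * L * ‖what - what'‖ := by field_simp
  rcases eq_or_lt_of_le (norm_nonneg (what - what')) with h0 | h0
  · rw [← h0]; positivity
  · rw [le_div_iff₀ hΛ]
    have := (mul_le_mul_iff_of_pos_right h0).mp (by nlinarith [hkey] : Λ * ‖what - what'‖ * ‖what - what'‖ ≤ 2 * L * ‖what - what'‖)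
    linarith
end
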